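/- arXiv:1803.09423 — 6 statements merged into one kernel-verified Lean document; each statement's English description precedes it below -/
import Mathlib

section
/- Let p be a prime and let K be a Z_p-extension of a field F. Then there exists σ ∈ Gal(K/F) whose fixed field K^σ = {c ∈ K : σ(c) = c} equals F. In fact, any extension to K of a nonidentity element of Gal(L_1/F) has this property. -/
/-- A field extension `K/F` is a `ℤ_p`-extension if there is a chain of intermediate fields
`F ⊆ L_1 ⊆ L_2 ⊆ …` (here `L m` denotes the paper's `L_{m+1}`) whose union is `K`, with each
`L_m` Galois over `F` with cyclic Galois group of order `p ^ m`. -/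
def IsZpExtension (p : ℕ) (F K : Type*) [Field F] [Field K] [Algebra F K]
    (L : ℕ → IntermediateField F K) : Prop :=
  Monotone L ∧ (⨆ m, L m) = ⊤ ∧
    ∀ m : ℕ, IsGalois F (L m) ∧ IsCyclic ((L m) ≃ₐ[F] (L m)) ∧
      Nat.card ((L m) ≃ₐ[F] (L m)) = p ^ (m + 1)

open Polynomial in
/-- In a Galois (possibly infinite) extension, an element fixed by every automorphism
lies in the base field. -/
lemma mem_bot_of_fixed_aux {F K : Type*} [Field F] [Field K] [Algebra F K] [IsGalois F K]
    (x : K) (hx : ∀ σ : K ≃ₐ[F] K, σ x = x) : x ∈ (⊥ : IntermediateField F K) := by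
  classical
  have hnorm : Normal F K := inferInstance
  have hint : IsIntegral F x := hnorm.isIntegral x
  rw [IntermediateField.mem_bot]
  by_contra hmem
  have hdeg1 : (minpoly F x).natDegree ≠ 1 := by
    intro h
    exact hmem ((minpoly.natDegree_eq_one_iff).mp h)
  have hdegpos : 0 < (minpoly F x).natDegree := minpoly.natDegree_pos hint
  have hdeg2 : 2 ≤ (minpoly F x).natDegree := by omega
  have hsplit : Splits ((minpoly F x).map (algebraMap F K)) := hnorm.splits x
  have hsep : (minpoly F x).Separable := Algebra.IsSeparable.isSeparable F x
  set R : Multiset K := ((minpoly F x).map (algebraMap F K)).roots with hR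
  have hcard : Multiset.card R = (minpoly F x).natDegree :=
    by rw [← natDegree_map (algebraMap F K)]; exact hsplit.natDegree_eq_card_roots.symm
  have hnodup : R.Nodup := nodup_roots (hsep.map)
  have hxR : x ∈ R := by
    rw [hR, mem_roots_map (minpoly.ne_zero hint)]
    simpa [Polynomial.aeval_def] using minpoly.aeval F x
  have hpos : 0 < Multiset.card (R.erase x) := by
    have h5 : Multiset.card (R.erase x) = Multiset.card R - 1 := by
      rw [Multiset.card_erase_of_mem hxR, Nat.pred_eq_sub_one]
    rw [h5, hcard]
    omega
  obtain ⟨y, hy⟩ := Multiset.card_pos_iff_exists_mem.mp hpos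
  obtain ⟨hyx, hyR⟩ := hnodup.mem_erase_iff.mp hy
  have hyroot : (Polynomial.aeval y) (minpoly F x) = 0 := by
    rw [hR, mem_roots_map (minpoly.ne_zero hint)] at hyR
    simpa [Polynomial.aeval_def] using hyR
  obtain ⟨σ, hσ⟩ := minpoly.exists_algEquiv_of_root hint.isAlgebraic hyroot
  apply hyx
  have := hx σ.symm
  calc y = σ.symm (σ y) := (σ.symm_apply_apply y).symm
    _ = σ.symm x := by rw [hσ]
    _ = x := hx σ.symm

/-- A surjective homomorphism from a cyclic group of order `p ^ (m + 1)` to a group of order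
`p` detects generators: any element with nontrivial image generates. -/
lemma zpowers_eq_top_aux {G H : Type*} [Group G] [Group H] [IsCyclic G]
    {p m : ℕ} (hp : p.Prime) (hG : Nat.card G = p ^ (m + 1)) (hH : Nat.card H = p)
    {f : G →* H} (hf : Function.Surjective f) {σ : G} (hσ : f σ ≠ 1) :
    Subgroup.zpowers σ = ⊤ := by
  have hGfin : Finite G := Nat.finite_of_card_ne_zero (by
    rw [hG]; exact pow_ne_zero _ hp.pos.ne')
  obtain ⟨g, hg⟩ := IsCyclic.exists_generator (α := G)
  have hog : orderOf g = p ^ (m + 1) := by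
    rw [orderOf_eq_card_of_forall_mem_zpowers hg, hG]
  have hfg : ∀ y : H, y ∈ Subgroup.zpowers (f g) := by
    intro y
    obtain ⟨w, rfl⟩ := hf y
    obtain ⟨z, rfl⟩ := hg w
    exact ⟨z, by rw [map_zpow]⟩
  have hofg : orderOf (f g) = p := by
    rw [orderOf_eq_card_of_forall_mem_zpowers hfg, hH]
  obtain ⟨j, rfl⟩ : ∃ j : ℕ, g ^ j = σ := by
    have h1 := hg σ
    rw [← mem_powers_iff_mem_zpowers] at h1
    exact h1
  have hpj : ¬ p ∣ j := by
    intro hdvd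
    apply hσ
    rw [map_pow]
    exact orderOf_dvd_iff_pow_eq_one.mp (hofg ▸ hdvd)
  have hcop : (orderOf g).Coprime j := by
    rw [hog]
    exact Nat.Coprime.pow_left _ ((Nat.Prime.coprime_iff_not_dvd hp).mpr hpj)
  apply Subgroup.eq_top_of_card_eq
  rw [Nat.card_zpowers, hcop.orderOf_pow, hog, hG]

set_option maxHeartbeats 1000000 in
set_option synthInstance.maxHeartbeats 100000 in
/-- In a `ℤ_p`-extension `K/F`, any `σ ∈ Gal(K/F)` that does not fix `L_1` pointwise has
fixed field exactly `F`; in particular, such a `σ` exists. -/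
theorem zpExtension_exists_fixedField_eq_bot
    (p : ℕ) (hp : p.Prime) (F K : Type*) [Field F] [Field K] [Algebra F K]
    (L : ℕ → IntermediateField F K) (hL : IsZpExtension p F K L) :
    (∀ σ : K ≃ₐ[F] K, (∃ x ∈ L 0, σ x ≠ x) →
      IntermediateField.fixedField (Subgroup.zpowers σ) = ⊥) ∧
    ∃ σ : K ≃ₐ[F] K, IntermediateField.fixedField (Subgroup.zpowers σ) = ⊥ := by
  obtain ⟨hmono, hsup, hLm⟩ := hL
  haveI hgal : ∀ m, IsGalois F (L m) := fun m => (hLm m).1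
  haveI hnormal : ∀ m, Normal F (L m) := fun m => ((hLm m).1).to_normal
  haveI hcyc : ∀ m, IsCyclic ((L m) ≃ₐ[F] (L m)) := fun m => (hLm m).2.1
  have hfix : ∀ σ : K ≃ₐ[F] K, (∃ x ∈ L 0, σ x ≠ x) →
      IntermediateField.fixedField (Subgroup.zpowers σ) = ⊥ := by
    rintro σ ⟨x₀, hx₀mem, hx₀⟩
    refine le_antisymm (fun c hc => ?_) bot_le
    have hσc : σ c = c := hc ⟨σ, Subgroup.mem_zpowers σ⟩
    obtain ⟨m, hcm⟩ : ∃ m, c ∈ L m := by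
      have h1 : c ∈ (⨆ m, L m : IntermediateField F K) := hsup ▸ IntermediateField.mem_top
      rwa [← SetLike.mem_coe, IntermediateField.coe_iSup_of_directed hmono.directed_le,
        Set.mem_iUnion] at h1
    have h0m : L 0 ≤ L m := hmono (Nat.zero_le m)
    letI : Algebra ↥(L 0) ↥(L m) := (IntermediateField.inclusion h0m).toAlgebra
    haveI : IsScalarTower F ↥(L 0) ↥(L m) :=
      IsScalarTower.of_algebraMap_eq fun a => rfl
    set σm : ↥(L m) ≃ₐ[F] ↥(L m) := AlgEquiv.restrictNormalHom (↥(L m)) σ with hσmdef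
    have hcomm : ∀ y : ↥(L m), ((σm y : ↥(L m)) : K) = σ (y : K) := fun y =>
      AlgEquiv.restrictNormal_commutes σ (↥(L m)) y
    have hfsurj : Function.Surjective
        (AlgEquiv.restrictNormalHom (F := F) (K₁ := ↥(L m)) (E := ↥(L 0))) :=
      AlgEquiv.restrictNormalHom_surjective (K₁ := ↥(L 0)) (E := ↥(L m))
    set f : (↥(L m) ≃ₐ[F] ↥(L m)) →* (↥(L 0) ≃ₐ[F] ↥(L 0)) :=
      AlgEquiv.restrictNormalHom (F := F) (↥(L 0)) with hfdef
    have hfσm : f σm ≠ 1 := by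
      intro h1
      apply hx₀
      set y : ↥(L 0) := ⟨x₀, hx₀mem⟩ with hy
      have h2 : (algebraMap ↥(L 0) ↥(L m)) ((f σm) y) = σm ((algebraMap ↥(L 0) ↥(L m)) y) :=
        AlgEquiv.restrictNormal_commutes σm (↥(L 0)) y
      rw [h1] at h2
      have h3 : ((algebraMap ↥(L 0) ↥(L m)) y : K) = x₀ := rfl
      calc σ x₀ = σ (((algebraMap ↥(L 0) ↥(L m)) y : ↥(L m)) : K) := by rw [h3]
        _ = ((σm ((algebraMap ↥(L 0) ↥(L m)) y) : ↥(L m)) : K) := (hcomm _).symm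
        _ = ((algebraMap ↥(L 0) ↥(L m)) ((1 : ↥(L 0) ≃ₐ[F] ↥(L 0)) y) : K) := by rw [h2]
        _ = x₀ := rfl
    have htop : Subgroup.zpowers σm = ⊤ :=
      zpowers_eq_top_aux hp ((hLm m).2.2) (by simpa using (hLm 0).2.2) hfsurj hfσm
    set c' : ↥(L m) := ⟨c, hcm⟩ with hc'
    have hfixσm : σm c' = c' := Subtype.ext (by rw [hcomm c']; exact hσc)
    have hall : ∀ τ : ↥(L m) ≃ₐ[F] ↥(L m), τ c' = c' := by
      intro τ
      have hle : Subgroup.zpowers σm ≤ MulAction.stabilizer (↥(L m) ≃ₐ[F] ↥(L m)) c' :=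
        Subgroup.zpowers_le.mpr hfixσm
      have hτ : τ ∈ MulAction.stabilizer (↥(L m) ≃ₐ[F] ↥(L m)) c' :=
        hle (htop ▸ Subgroup.mem_top τ)
      exact hτ
    have hbot := mem_bot_of_fixed_aux c' hall
    rw [IntermediateField.mem_bot] at hbot
    obtain ⟨a, ha⟩ := hbot
    rw [IntermediateField.mem_bot]
    exact ⟨a, by simpa using congrArg (Subtype.val) ha⟩
  refine ⟨hfix, ?_⟩
  haveI hnK : Normal F K := by
    have h1 : Normal F ↥(⨆ m, L m : IntermediateField F K) := IntermediateField.normal_iSup F K L (h := fun i => hnormal i)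
    rw [hsup] at h1
    exact Normal.of_algEquiv (h := h1) IntermediateField.topEquiv
  have hnontriv : Nontrivial (↥(L 0) ≃ₐ[F] ↥(L 0)) := by
    rcases subsingleton_or_nontrivial (↥(L 0) ≃ₐ[F] ↥(L 0)) with h | h
    · exfalso
      haveI : Unique (↥(L 0) ≃ₐ[F] ↥(L 0)) := uniqueOfSubsingleton 1
      have h2 : p ^ (0 + 1) = 1 := ((hLm 0).2.2).symm.trans Nat.card_unique
      rw [pow_one] at h2
      exact hp.one_lt.ne' h2
    · exact h
  obtain ⟨τ, hτ⟩ := exists_ne (1 : ↥(L 0) ≃ₐ[F] ↥(L 0))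
  obtain ⟨σ, hστ⟩ := AlgEquiv.restrictNormalHom_surjective (K₁ := ↥(L 0)) (E := K) τ
  obtain ⟨y, hy⟩ : ∃ y : ↥(L 0), τ y ≠ y := by
    by_contra h
    push_neg at h
    exact hτ (AlgEquiv.ext h)
  refine ⟨σ, hfix σ ⟨(y : K), y.2, ?_⟩⟩
  intro heq
  apply hy
  have hcom : ((AlgEquiv.restrictNormalHom (↥(L 0)) σ) y : K) = σ (y : K) :=
    AlgEquiv.restrictNormal_commutes σ (↥(L 0)) y
  rw [hστ] at hcom
  exact Subtype.ext (hcom.trans heq)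
end

section
/- Let p be a prime, m a positive integer, and F a field containing p^m distinct p^m-th roots of unity (equivalently, char F ≠ p and F contains a primitive p^m-th root of unity). If a ∈ F with a ∉ F^p, and α is a root of X^{p^m} − a in an algebraic closure of F, then F(α) is a Galois extension of F of degree p^m with cyclic Galois group Gal(F(α)/F) ≅ Z/p^m Z. -/
open Polynomial IntermediateField

universe u

/-- If `K` contains a square root of `-1` and `a` is not a square, then `X ^ 2 ^ n - a`
is irreducible. -/
theorem aux_X_pow_two_pow_sub_C_irreducible (n : ℕ) :
    ∀ {K : Type u} [Field K] (i : K), i ^ 2 = -1 →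
      ∀ {a : K}, (∀ b : K, b ^ 2 ≠ a) → Irreducible (X ^ 2 ^ n - C a) := by
  induction n with
  | zero =>
    intro K _ i hi a ha
    simpa using irreducible_X_sub_C a
  | succ n IH =>
    intro K _ i hi a ha
    rw [pow_succ]
    refine X_pow_mul_sub_C_irreducible
      (X_pow_sub_C_irreducible_of_prime Nat.prime_two ha) ?_
    intro E _ _ x hx
    have hint : IsIntegral K x := not_not.mp fun h ↦ by
      simpa only [degree_zero, degree_X_pow_sub_C (by norm_num : 0 < 2),
        WithBot.natCast_ne_bot] using congr_arg degree (hx.symm.trans (dif_neg h))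
    refine IH (algebraMap K K⟮x⟯ i) (by rw [← map_pow, hi, map_neg, map_one]) ?_
    intro b hb
    -- the norm of the generator is `-a`
    have hnorm : Algebra.norm K (AdjoinSimple.gen K x) = -a := by
      rw [← IntermediateField.adjoin.powerBasis_gen hint,
        Algebra.PowerBasis.norm_gen_eq_coeff_zero_minpoly]
      simp [IntermediateField.minpoly_gen, hx]
    refine ha (i * Algebra.norm K b) ?_
    rw [mul_pow, hi, ← map_pow, hb, hnorm]
    ring

/-- Let `p` be a prime, `m ≥ 1`, and `F` a field containing a primitive `p^m`-th root of unity
(equivalently, `p^m` distinct `p^m`-th roots of unity). If `a ∈ F` is not a `p`-th power and `α`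
is a root of `X^(p^m) - a` in an algebraic closure of `F`, then `F(α)` is a Galois extension of
`F` of degree `p^m` with cyclic Galois group of order `p^m` (so `≅ ℤ/p^m ℤ`). -/
theorem kummer_cyclic_extension
    (p m : ℕ) (hp : p.Prime) (hm : 1 ≤ m) (F : Type*) [Field F]
    (ζ : F) (hζ : IsPrimitiveRoot ζ (p ^ m))
    (a : F) (ha : ∀ b : F, b ^ p ≠ a)
    (α : AlgebraicClosure F) (hα : α ^ (p ^ m) = algebraMap F (AlgebraicClosure F) a) :
    IsGalois F (IntermediateField.adjoin F {α}) ∧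
    Module.finrank F (IntermediateField.adjoin F {α}) = p ^ m ∧
    IsCyclic ((IntermediateField.adjoin F {α}) ≃ₐ[F] (IntermediateField.adjoin F {α})) ∧
    Nat.card ((IntermediateField.adjoin F {α}) ≃ₐ[F] (IntermediateField.adjoin F {α}))
      = p ^ m := by
  have hn0 : p ^ m ≠ 0 := pow_ne_zero _ hp.ne_zero
  haveI : NeZero (p ^ m) := ⟨hn0⟩
  have hζ' : (primitiveRoots (p ^ m) F).Nonempty :=
    ⟨ζ, (mem_primitiveRoots (Nat.pos_of_ne_zero hn0)).mpr hζ⟩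
  have H : Irreducible (X ^ (p ^ m) - C a) := by
    rcases eq_or_ne p 2 with rfl | hp2
    · rcases eq_or_lt_of_le hm with rfl | hm2
      · simpa using X_pow_sub_C_irreducible_of_prime Nat.prime_two ha
      · -- `m ≥ 2`, so `F` contains a primitive 4th root of unity `i`
        have h4 : IsPrimitiveRoot (ζ ^ (2 ^ (m - 2))) 4 := by
          refine hζ.pow (Nat.pos_of_ne_zero hn0) ?_
          have : 2 ^ (m - 2) * 4 = 2 ^ (m - 2) * 2 ^ 2 := by norm_num
          rw [this, ← pow_add]
          congr 1
          omega
        have h2 : IsPrimitiveRoot ((ζ ^ (2 ^ (m - 2))) ^ 2) 2 :=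
          h4.pow (by norm_num) (by norm_num)
        exact aux_X_pow_two_pow_sub_C_irreducible m _ h2.eq_neg_one_of_two_right ha
    · exact X_pow_sub_C_irreducible_of_prime_pow hp hp2 m ha
  have haev : (Polynomial.aeval α) (X ^ (p ^ m) - C a) = 0 := by
    rw [map_sub, map_pow, aeval_X, aeval_C, hα, sub_self]
  have hint : IsIntegral F α := ⟨X ^ (p ^ m) - C a, monic_X_pow_sub_C a hn0, by
    simpa [Polynomial.aeval_def] using haev⟩
  have hmin : minpoly F α = X ^ (p ^ m) - C a :=
    (minpoly.eq_of_irreducible_of_monic H haev (monic_X_pow_sub_C a hn0)).symm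
  haveI := Fact.mk H
  haveI : IsSplittingField F (AdjoinRoot (X ^ (p ^ m) - C a)) (X ^ (p ^ m) - C a) :=
    isSplittingField_AdjoinRoot_X_pow_sub_C hζ' H
  have e : AdjoinRoot (minpoly F α) ≃ₐ[F] F⟮α⟯ :=
    IntermediateField.adjoinRootEquivAdjoin F hint
  rw [hmin] at e
  haveI : IsSplittingField F F⟮α⟯ (X ^ (p ^ m) - C a) :=
    Polynomial.IsSplittingField.of_algEquiv (p := X ^ (p ^ m) - C a) (f := e)
  refine ⟨isGalois_of_isSplittingField_X_pow_sub_C hζ' H F⟮α⟯,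
    finrank_of_isSplittingField_X_pow_sub_C hζ' H F⟮α⟯,
    isCyclic_of_isSplittingField_X_pow_sub_C hζ' H F⟮α⟯, ?_⟩
  rw [Nat.card_congr ((autEquivZmod H F⟮α⟯ hζ).toEquiv.trans Multiplicative.toAdd)]
  simp [Nat.card_zmod]
end

section
/- Let G be a linearly ordered abelian group and let R be a G-graded ring, R = ⊕_{g∈G} R_g, such that the product of any two nonzero homogeneous elements of R is nonzero. Then every unit of R is homogeneous: if r ∈ R is invertible, then r ∈ R_g for some g ∈ G. -/
open DirectSum

set_option maxHeartbeats 1000000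
set_option synthInstance.maxHeartbeats 400000

/-- Auxiliary lemma: the component of a product at an "extreme" degree is the product of the
corresponding components. -/
lemma aux_mul_apply_extreme
    (ι : Type*) [AddCommGroup ι] [LinearOrder ι] [IsOrderedAddMonoid ι] [DecidableEq ι]
    (R : Type*) [Ring R] (ℳ : ι → AddSubgroup R) [GradedRing ℳ]
    [∀ (i : ι) (x : ℳ i), Decidable (x ≠ 0)]
    (A B : ⨁ i, ℳ i) (a b : ι)
    (ha : a ∈ DFinsupp.support A) (hb : b ∈ DFinsupp.support B)
    (H : ∀ i ∈ DFinsupp.support A, ∀ j ∈ DFinsupp.support B, i + j = a + b → i = a) :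
    (((A * B) (a + b) : R)) = (A a : R) * (B b : R) := by
  classical
  rw [DirectSum.coe_mul_apply]
  refine Finset.sum_eq_single_of_mem (a, b) ?_ ?_
  · simp only [Finset.mem_filter, Finset.mem_product]
    exact ⟨⟨ha, hb⟩, by simp⟩
  · rintro ⟨i, j⟩ hij hne
    simp only [Finset.mem_filter, Finset.mem_product] at hij
    have hi : i = a := H i hij.1.1 j hij.1.2 hij.2
    subst hi
    have hj : j = b := by
      have := hij.2
      exact add_left_cancel this
    subst hj
    exact absurd rfl hne

/-- Let `G` (`ι` here) be a linearly ordered abelian group and `R` a `G`-graded ring in which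
the product of two nonzero homogeneous elements is nonzero.  Then every unit of `R` is
homogeneous. -/
theorem units_homogeneous_of_graded
    (ι : Type*) [AddCommGroup ι] [LinearOrder ι] [IsOrderedAddMonoid ι] [DecidableEq ι]
    (R : Type*) [Ring R] (ℳ : ι → AddSubgroup R) [GradedRing ℳ]
    (hdom : ∀ (g h : ι) (a b : R), a ∈ ℳ g → b ∈ ℳ h → a ≠ 0 → b ≠ 0 → a * b ≠ 0) :
    ∀ r : R, IsUnit r → ∃ g : ι, r ∈ ℳ g := by
  classical
  intro r hr
  obtain ⟨u, rfl⟩ := hr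
  by_cases h0 : (u : R) = 0
  · exact ⟨0, h0 ▸ (ℳ 0).zero_mem⟩
  set s : R := ((u⁻¹ : Rˣ) : R) with hs_def
  have hrs : (u : R) * s = 1 := u.mul_inv
  have hs0 : s ≠ 0 := by
    intro h
    apply h0
    have h1 : (1 : R) = 0 := by rw [← hrs, h, mul_zero]
    calc (u : R) = (u : R) * 1 := by rw [mul_one]
    _ = 0 := by rw [h1, mul_zero]
  set A := DirectSum.decompose ℳ (u : R) with hA_def
  set B := DirectSum.decompose ℳ s with hB_def
  have hA0 : A ≠ 0 := by
    intro h
    apply h0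
    have h2 : DirectSum.decompose ℳ (u : R) = DirectSum.decompose ℳ (0 : R) := by
      rw [DirectSum.decompose_zero]; exact h
    exact (DirectSum.decompose ℳ).injective h2
  have hB0 : B ≠ 0 := by
    intro h
    apply hs0
    have h2 : DirectSum.decompose ℳ s = DirectSum.decompose ℳ (0 : R) := by
      rw [DirectSum.decompose_zero]; exact h
    exact (DirectSum.decompose ℳ).injective h2
  have hAsupp : (DFinsupp.support A).Nonempty := by
    rw [Finset.nonempty_iff_ne_empty]
    intro h
    exact hA0 (DFinsupp.support_eq_empty.mp h)
  have hBsupp : (DFinsupp.support B).Nonempty := by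
    rw [Finset.nonempty_iff_ne_empty]
    intro h
    exact hB0 (DFinsupp.support_eq_empty.mp h)
  set a := (DFinsupp.support A).max' hAsupp with ha_def
  set a' := (DFinsupp.support A).min' hAsupp with ha'_def
  set b := (DFinsupp.support B).max' hBsupp with hb_def
  set b' := (DFinsupp.support B).min' hBsupp with hb'_def
  have haA : a ∈ DFinsupp.support A := (DFinsupp.support A).max'_mem hAsupp
  have ha'A : a' ∈ DFinsupp.support A := (DFinsupp.support A).min'_mem hAsupp
  have hbB : b ∈ DFinsupp.support B := (DFinsupp.support B).max'_mem hBsupp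
  have hb'B : b' ∈ DFinsupp.support B := (DFinsupp.support B).min'_mem hBsupp
  have hAB : A * B = 1 := by
    rw [hA_def, hB_def, ← DirectSum.decompose_mul, hrs, DirectSum.decompose_one]
  -- nonvanishing of the extreme coefficients
  have hAa : (A a : R) ≠ 0 := by
    simpa using (DFinsupp.mem_support_iff.mp haA) ∘ Subtype.ext
  have hAa' : (A a' : R) ≠ 0 := by
    simpa using (DFinsupp.mem_support_iff.mp ha'A) ∘ Subtype.ext
  have hBb : (B b : R) ≠ 0 := by
    simpa using (DFinsupp.mem_support_iff.mp hbB) ∘ Subtype.ext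
  have hBb' : (B b' : R) ≠ 0 := by
    simpa using (DFinsupp.mem_support_iff.mp hb'B) ∘ Subtype.ext
  -- the component of 1 at a nonzero degree vanishes
  have hone : ∀ n : ι, n ≠ 0 → (((1 : ⨁ i, ℳ i) n : R)) = 0 := by
    intro n hn
    rw [DirectSum.one_def, DirectSum.of_eq_of_ne _ _ _ hn]
    rfl
  -- max degrees: a + b = 0
  have hmax : a + b = 0 := by
    by_contra h
    have hcomp : (((A * B) (a + b) : R)) = (A a : R) * (B b : R) := by
      refine aux_mul_apply_extreme ι R ℳ A B a b haA hbB ?_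
      intro i hi j hj hij
      have h1 : i ≤ a := (DFinsupp.support A).le_max' i hi
      have h2 : j ≤ b := (DFinsupp.support B).le_max' j hj
      by_contra hne
      have : i < a := lt_of_le_of_ne h1 hne
      have : i + j < a + b := add_lt_add_of_lt_of_le this h2
      exact absurd hij this.ne
    rw [hAB, hone _ h] at hcomp
    exact hdom a b _ _ (A a).2 (B b).2 hAa hBb hcomp.symm
  -- min degrees: a' + b' = 0
  have hmin : a' + b' = 0 := by
    by_contra h
    have hcomp : (((A * B) (a' + b') : R)) = (A a' : R) * (B b' : R) := by
      refine aux_mul_apply_extreme ι R ℳ A B a' b' ha'A hb'B ?_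
      intro i hi j hj hij
      have h1 : a' ≤ i := (DFinsupp.support A).min'_le i hi
      have h2 : b' ≤ j := (DFinsupp.support B).min'_le j hj
      by_contra hne
      have : a' < i := lt_of_le_of_ne h1 (Ne.symm hne)
      have : a' + b' < i + j := add_lt_add_of_lt_of_le this h2
      exact absurd hij this.ne'
    rw [hAB, hone _ h] at hcomp
    exact hdom a' b' _ _ (A a').2 (B b').2 hAa' hBb' hcomp.symm
  -- hence a' = a
  have haa' : a' = a := by
    have h1 : a' ≤ a := (DFinsupp.support A).min'_le a haA
    have h2 : b' ≤ b := (DFinsupp.support B).min'_le b hbB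
    have h3 : a + b' ≤ a + b := add_le_add_right h2 a
    rw [hmax, ← hmin] at h3
    have h4 : a ≤ a' := le_of_add_le_add_right h3
    exact le_antisymm h1 h4
  -- the support is {a}
  have hsupp : DFinsupp.support A = {a} := by
    apply Finset.eq_singleton_iff_unique_mem.mpr
    refine ⟨haA, fun i hi => ?_⟩
    have h1 : i ≤ a := (DFinsupp.support A).le_max' i hi
    have h2 : a' ≤ i := (DFinsupp.support A).min'_le i hi
    rw [haa'] at h2
    exact le_antisymm h1 h2
  refine ⟨a, ?_⟩
  have := DirectSum.sum_support_decompose ℳ (u : R)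
  rw [← hA_def, hsupp, Finset.sum_singleton] at this
  exact this ▸ (A a).2
end

section
/- Let K be a field, G a free abelian group of finite rank, ψ : G → Aut(K) a group homomorphism whose image ψ(G) is finite of cardinality k, and R = K#G a crossed product of K by G via ψ. Then R is a free module over its center Z(R) of rank k². Explicitly, if {c_1, …, c_k} is a basis of K over the fixed field E = K^{ψ(G)} and g_1, …, g_k are coset representatives of H = ker(ψ) in G, then {c_i u_{g_j} : 1 ≤ i, j ≤ k} is a basis of R over Z(R). -/
/-- A crossed product `R = K#G` of a field `K` by a group `G` via `ψ : G → Aut(K)` (with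
trivial cocycle): `K` embeds in `R` via `emb`, there are units `u g` with `u 1 = 1`,
`u g * u h = u (g*h)`, conjugation by `u g` acts on `K` as `ψ g`, and `R` is a free left
`K`-module with basis `(u g)_{g ∈ G}` (every element has a unique expansion `Σ emb c_g * u g`). -/
structure CrossedProduct (K G R : Type*) [Field K] [Group G] [Ring R]
    (ψ : G →* (K ≃+* K)) where
  emb : K →+* R
  u : G → Rˣ
  u_one : u 1 = 1
  u_mul : ∀ g h : G, u g * u h = u (g * h)
  conj : ∀ (g : G) (c : K), (u g : R) * emb c = emb (ψ g c) * (u g : R)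
  repr : ∀ r : R, ∃! f : G →₀ K, r = f.sum fun g c => emb c * (u g : R)

/-- `G` is a free abelian group of finite rank. -/
def IsFreeAbelianOfFiniteRank (G : Type*) [Group G] : Prop :=
  ∃ n : ℕ, Nonempty (G ≃* Multiplicative (Fin n → ℤ))

/-- The fixed field `K^{ψ(G)}` of the action `ψ` of `G` on `K`, as a subfield of `K`. -/
def fixedSubfield (K G : Type*) [Field K] [Group G] (ψ : G →* (K ≃+* K)) : Subfield K where
  carrier := {c : K | ∀ g : G, ψ g c = c}
  zero_mem' := fun g => map_zero _
  one_mem' := fun g => map_one _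
  add_mem' := fun ha hb g => by rw [map_add]; rw [ha g, hb g]
  mul_mem' := fun ha hb g => by rw [map_mul]; rw [ha g, hb g]
  neg_mem' := fun ha g => by rw [map_neg]; rw [ha g]
  inv_mem' := fun a ha g => by rw [map_inv₀]; rw [ha g]

namespace CrossedProduct

variable {K G R : Type*} [Field K] [Group G] [Ring R] {ψ : G →* (K ≃+* K)}
variable (X : CrossedProduct K G R ψ)

lemma mem_fixedSubfield {c : K} : c ∈ fixedSubfield K G ψ ↔ ∀ g : G, ψ g c = c := Iff.rfl

/-- The expansion map as an additive hom. -/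
noncomputable def toR : (G →₀ K) →+ R where
  toFun f := f.sum fun g c => X.emb c * (X.u g : R)
  map_zero' := Finsupp.sum_zero_index
  map_add' f₁ f₂ := by
    show (f₁ + f₂).sum (fun g c => X.emb c * (X.u g : R))
        = f₁.sum (fun g c => X.emb c * (X.u g : R)) + f₂.sum (fun g c => X.emb c * (X.u g : R))
    exact Finsupp.sum_add_index' (fun g => by rw [map_zero, zero_mul])
      (fun g b₁ b₂ => by rw [map_add, add_mul])

lemma toR_apply (f : G →₀ K) :
    X.toR f = ∑ g ∈ f.support, X.emb (f g) * (X.u g : R) := rfl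

lemma toR_single (g : G) (c : K) :
    X.toR (Finsupp.single g c) = X.emb c * (X.u g : R) := by
  show (Finsupp.single g c).sum (fun g c => X.emb c * (X.u g : R)) = _
  exact Finsupp.sum_single_index (by rw [map_zero, zero_mul])

lemma toR_bijective : Function.Bijective X.toR := by
  constructor
  · intro f₁ f₂ h
    obtain ⟨f, hf, hu⟩ := X.repr (X.toR f₁)
    exact (hu f₁ rfl).trans (hu f₂ h).symm
  · intro r
    obtain ⟨f, hf, -⟩ := X.repr r
    exact ⟨f, hf.symm⟩

noncomputable def adE : (G →₀ K) ≃+ R := AddEquiv.ofBijective X.toR X.toR_bijective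

/-- The coefficient finsupp of an element. -/
noncomputable def co (r : R) : G →₀ K := X.adE.symm r

lemma co_of_eq {r : R} {f : G →₀ K} (h : r = X.toR f) : X.co r = f := by
  rw [co, h]
  exact X.adE.symm_apply_apply f

lemma co_spec (r : R) : r = ∑ g ∈ (X.co r).support, X.emb (X.co r g) * (X.u g : R) := by
  conv_lhs => rw [← X.adE.apply_symm_apply r]
  rfl

lemma eq_zero_of_co_eq_zero {r : R} (h : X.co r = 0) : r = 0 := by
  have := X.adE.apply_symm_apply r
  rw [co] at h
  rw [← this, h, map_zero]

lemma gen_mul (a b : K) (g h : G) :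
    (X.emb a * (X.u g : R)) * (X.emb b * (X.u h : R))
      = X.emb (a * ψ g b) * (X.u (g * h) : R) := by
  rw [map_mul, mul_assoc, ← mul_assoc ((X.u g : R)), X.conj, mul_assoc, ← Units.val_mul,
    X.u_mul, ← mul_assoc]

open scoped Classical in
lemma sum_single_apply {s : Finset G} (τ : G → G) (hτ : Function.Injective τ) (v : G → K)
    {y : G} (g₀ : G) (hy : τ g₀ = y) :
    (∑ g ∈ s, Finsupp.single (τ g) (v g)) y = if g₀ ∈ s then v g₀ else 0 := by
  classical
  subst hy
  rw [Finset.sum_apply']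
  rw [Finset.sum_congr rfl (fun g _ => Finsupp.single_apply)]
  simp only [hτ.eq_iff]
  exact Finset.sum_ite_eq' _ _ _

/-- Characterization of coefficients of central elements, forward direction. -/
lemma center_co (hcomm : ∀ a b : G, a * b = b * a) {z : R} (hz : z ∈ Subring.center R)
    (g₀ : G) :
    X.co z g₀ ∈ fixedSubfield K G ψ ∧ (X.co z g₀ ≠ 0 → g₀ ∈ ψ.ker) := by
  classical
  rw [Subring.mem_center_iff] at hz
  set f := X.co z with hfdef
  have hz1 : z = ∑ g ∈ f.support, X.emb (f g) * (X.u g : R) := X.co_spec z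
  constructor
  · rw [mem_fixedSubfield]
    intro h
    have h1 : X.co ((X.u h : R) * z)
        = ∑ g ∈ f.support, Finsupp.single (h * g) (ψ h (f g)) := by
      apply X.co_of_eq
      rw [map_sum]
      conv_lhs => rw [hz1, Finset.mul_sum]
      refine Finset.sum_congr rfl fun g _ => ?_
      rw [toR_single, ← mul_assoc, X.conj, mul_assoc, ← Units.val_mul, X.u_mul]
    have h2 : X.co (z * (X.u h : R)) = ∑ g ∈ f.support, Finsupp.single (g * h) (f g) := by
      apply X.co_of_eq
      rw [map_sum]
      conv_lhs => rw [hz1, Finset.sum_mul]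
      refine Finset.sum_congr rfl fun g _ => ?_
      rw [toR_single, mul_assoc, ← Units.val_mul, X.u_mul]
    have hAB : (∑ g ∈ f.support, Finsupp.single (h * g) (ψ h (f g)))
        = ∑ g ∈ f.support, Finsupp.single (g * h) (f g) := by
      rw [← h1, ← h2, hz]
    have hev := congrArg (fun F : G →₀ K => F (g₀ * h)) hAB
    rw [sum_single_apply (fun g => h * g) (mul_right_injective h) _ g₀ (hcomm h g₀),
      sum_single_apply (fun g => g * h) (mul_left_injective h) _ g₀ rfl] at hev
    by_cases hmem : g₀ ∈ f.support
    · rwa [if_pos hmem, if_pos hmem] at hev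
    · rw [Finsupp.notMem_support_iff] at hmem
      rw [hmem, map_zero]
  · intro hne
    have hmem : g₀ ∈ f.support := Finsupp.mem_support_iff.2 hne
    rw [MonoidHom.mem_ker]
    refine RingEquiv.ext fun d => ?_
    have h1 : X.co (X.emb d * z) = ∑ g ∈ f.support, Finsupp.single g (d * f g) := by
      apply X.co_of_eq
      rw [map_sum]
      conv_lhs => rw [hz1, Finset.mul_sum]
      refine Finset.sum_congr rfl fun g _ => ?_
      rw [toR_single, ← mul_assoc, ← map_mul]
    have h2 : X.co (z * X.emb d) = ∑ g ∈ f.support, Finsupp.single g (f g * ψ g d) := by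
      apply X.co_of_eq
      rw [map_sum]
      conv_lhs => rw [hz1, Finset.sum_mul]
      refine Finset.sum_congr rfl fun g _ => ?_
      rw [toR_single, mul_assoc, X.conj, ← mul_assoc, ← map_mul]
    have hAB : (∑ g ∈ f.support, Finsupp.single g (d * f g))
        = ∑ g ∈ f.support, Finsupp.single g (f g * ψ g d) := by
      rw [← h1, ← h2, hz]
    have hev := congrArg (fun F : G →₀ K => F g₀) hAB
    rw [sum_single_apply (fun g => g) Function.injective_id _ g₀ rfl,
      sum_single_apply (fun g => g) Function.injective_id _ g₀ rfl,
      if_pos hmem, if_pos hmem] at hev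
    have : d * f g₀ = (ψ g₀ d) * f g₀ := by rw [hev, mul_comm]
    have := mul_right_cancel₀ hne this
    simpa using this.symm

/-- Reverse direction: elements with coefficients in `E` supported in `H` are central. -/
lemma mem_center_of (hcomm : ∀ a b : G, a * b = b * a) {f : G →₀ K}
    (hker : ∀ g ∈ f.support, g ∈ ψ.ker) (hfix : ∀ g, f g ∈ fixedSubfield K G ψ) :
    X.toR f ∈ Subring.center R := by
  rw [Subring.mem_center_iff]
  intro r
  conv_lhs => rw [X.co_spec r, Finset.sum_mul]
  conv_rhs => rw [X.co_spec r, Finset.mul_sum]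
  refine Finset.sum_congr rfl fun x _ => ?_
  rw [toR_apply, Finset.sum_mul, Finset.mul_sum]
  refine Finset.sum_congr rfl fun g hg => ?_
  rw [gen_mul, gen_mul]
  have h1 : ψ x (f g) = f g := (hfix g) x
  have h2 : ψ g (X.co r x) = X.co r x := by
    have h3 := MonoidHom.mem_ker.1 (hker g hg)
    rw [h3]; rfl
  rw [h1, h2, mul_comm (X.co r x) (f g), hcomm x g]

lemma gen_center (hcomm : ∀ a b : G, a * b = b * a) {e : K}
    (he : e ∈ fixedSubfield K G ψ) {h : G} (hh : h ∈ ψ.ker) :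
    X.emb e * (X.u h : R) ∈ Subring.center R := by
  classical
  rw [← X.toR_single h e]
  apply X.mem_center_of hcomm
  · intro g hg
    have := Finsupp.support_single_subset hg
    rw [Finset.mem_singleton] at this
    rwa [this]
  · intro g
    rw [Finsupp.single_apply]
    split
    · exact he
    · exact Subfield.zero_mem _

lemma co_center_mul (hcomm : ∀ a b : G, a * b = b * a) {z : R}
    (hz : z ∈ Subring.center R) (cc : K) (g' y : G) :
    X.co (z * (X.emb cc * (X.u g' : R))) y = X.co z (y * g'⁻¹) * cc := by
  classical
  set f := X.co z with hfdef
  have hco : X.co (z * (X.emb cc * (X.u g' : R)))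
      = ∑ g ∈ f.support, Finsupp.single (g * g') (f g * ψ g cc) := by
    apply X.co_of_eq
    rw [map_sum]
    conv_lhs => rw [X.co_spec z, Finset.sum_mul]
    refine Finset.sum_congr rfl fun g _ => ?_
    rw [toR_single, gen_mul]
  rw [hco, sum_single_apply (fun g => g * g') (mul_left_injective g') _ (y * g'⁻¹)
    (inv_mul_cancel_right y g')]
  by_cases hmem : y * g'⁻¹ ∈ f.support
  · rw [if_pos hmem]
    have hker := (X.center_co hcomm hz (y * g'⁻¹)).2 (Finsupp.mem_support_iff.1 hmem)
    have : ψ (y * g'⁻¹) cc = cc := by rw [MonoidHom.mem_ker.1 hker]; rfl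
    rw [this]
  · rw [if_neg hmem, Finsupp.notMem_support_iff.1 hmem, zero_mul]

/-- The main basis construction. -/
theorem exists_basis (hcomm : ∀ a b : G, a * b = b * a)
    (k : ℕ) (c : Module.Basis (Fin k) (fixedSubfield K G ψ) K) (gr : Fin k → G)
    (hgr : ∀ g : G, ∃! j : Fin k, (gr j)⁻¹ * g ∈ ψ.ker) :
    ∃ b : Module.Basis (Fin k × Fin k) (Subring.center R) R,
      ∀ ij : Fin k × Fin k, b ij = X.emb (c ij.1) * (X.u (gr ij.2) : R) := by
  classical
  set v : Fin k × Fin k → R := fun ij => X.emb (c ij.1) * (X.u (gr ij.2) : R) with hv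
  have hli : LinearIndependent (Subring.center R) v := by
    rw [Fintype.linearIndependent_iff]
    intro w hw ij
    have hw' : ∑ p : Fin k × Fin k, (w p : R) * v p = 0 := hw
    have hco : ∀ y : G,
        ∑ p : Fin k × Fin k, X.co ((w p : R)) (y * (gr p.2)⁻¹) * (c p.1) = 0 := by
      intro y
      have h2 : X.adE.symm (∑ p : Fin k × Fin k, (w p : R) * v p) = 0 := by
        rw [hw']; exact map_zero X.adE.symm
      rw [map_sum X.adE.symm _ _] at h2
      have hev := congrArg (fun F : G →₀ K => F y) h2
      simp only [Finsupp.coe_zero, Pi.zero_apply] at hev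
      rw [Finset.sum_apply'] at hev
      rw [← hev]
      refine Finset.sum_congr rfl fun p _ => ?_
      exact (X.co_center_mul hcomm (w p).2 (c p.1) (gr p.2) y).symm
    -- show the coefficient finsupp of w ij vanishes
    have hz : X.co ((w ij : R)) = 0 := by
      ext h
      by_cases hker : h ∈ ψ.ker
      · -- evaluate at h * gr ij.2
        have h0 := hco (h * gr ij.2)
        rw [Fintype.sum_prod_type] at h0
        have hxj : ∀ i : Fin k, ∀ j : Fin k, j ≠ ij.2 →
            X.co ((w (i, j) : R)) (h * gr ij.2 * (gr j)⁻¹) * (c i) = 0 := by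
          intro i j hj
          have hnk : h * gr ij.2 * (gr j)⁻¹ ∉ ψ.ker := by
            intro hmem
            apply hj
            have h5 : (gr j)⁻¹ * gr ij.2 ∈ ψ.ker := by
              have h6 : h⁻¹ * (h * gr ij.2 * (gr j)⁻¹) ∈ ψ.ker :=
                Subgroup.mul_mem _ (Subgroup.inv_mem _ hker) hmem
              have h7 : h⁻¹ * (h * gr ij.2 * (gr j)⁻¹) = (gr j)⁻¹ * gr ij.2 := by
                rw [mul_assoc h, ← mul_assoc h⁻¹ h, inv_mul_cancel, one_mul,
                  hcomm (gr ij.2) (gr j)⁻¹]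
              rwa [h7] at h6
            obtain ⟨j', hj', huniq⟩ := hgr (gr ij.2)
            have e1 : j = j' := huniq j h5
            have e2 : ij.2 = j' := huniq ij.2 (by simpa using Subgroup.one_mem ψ.ker)
            rw [e1, e2]
          have : X.co ((w (i, j) : R)) (h * gr ij.2 * (gr j)⁻¹) = 0 := by
            by_contra hne
            exact hnk ((X.center_co hcomm (w (i, j)).2 _).2 hne)
          rw [this, zero_mul]
        have h1 : ∀ i : Fin k,
            (∑ j : Fin k, X.co ((w (i, j) : R)) (h * gr ij.2 * (gr j)⁻¹) * (c i))
              = X.co ((w (i, ij.2) : R)) h * (c i) := by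
          intro i
          rw [Fintype.sum_eq_single ij.2 (fun j hj => hxj i j hj)]
          congr 2
          group
        rw [Finset.sum_congr rfl (fun i _ => h1 i)] at h0
        -- now use E-linear independence of c
        set e : Fin k → fixedSubfield K G ψ := fun i =>
          ⟨X.co ((w (i, ij.2) : R)) h, (X.center_co hcomm (w (i, ij.2)).2 h).1⟩ with he
        have h9 : ∑ i : Fin k, e i • c i = 0 := by
          rw [← h0]
          rfl
        have h10 := Fintype.linearIndependent_iff.1 c.linearIndependent e h9 ij.1
        have h11 : X.co ((w (ij.1, ij.2) : R)) h = 0 := by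
          have := congrArg (fun x : fixedSubfield K G ψ => (x : K)) h10
          simpa [he] using this
        simpa using h11
      · by_contra hne
        exact hker ((X.center_co hcomm (w ij).2 h).2 hne)
    have : (w ij : R) = 0 := X.eq_zero_of_co_eq_zero hz
    exact Subtype.ext this
  have hsp : ⊤ ≤ Submodule.span (Subring.center R) (Set.range v) := by
    intro r _
    rw [X.co_spec r]
    apply Submodule.sum_mem
    intro g _
    obtain ⟨j, hj, -⟩ := hgr g
    have hh : g * (gr j)⁻¹ ∈ ψ.ker := by rw [hcomm g (gr j)⁻¹]; exact hj
    have hexp : X.emb (X.co r g) * (X.u g : R)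
        = ∑ i : Fin k, (X.emb (((c.repr (X.co r g)) i : K)) * (X.u (g * (gr j)⁻¹) : R))
            * v (i, j) := by
      have hterm : ∀ i : Fin k,
          (X.emb (((c.repr (X.co r g)) i : K)) * (X.u (g * (gr j)⁻¹) : R)) * v (i, j)
            = X.emb (((c.repr (X.co r g)) i : K) * c i) * (X.u g : R) := by
        intro i
        show _ * (X.emb (c i) * (X.u (gr j) : R)) = _
        rw [gen_mul]
        have h1 : ψ (g * (gr j)⁻¹) (c i) = c i := by rw [MonoidHom.mem_ker.1 hh]; rfl
        rw [h1]
        congr 2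
        group
      have hsum : (∑ i : Fin k, (((c.repr (X.co r g)) i : K)) * c i) = X.co r g := by
        conv_rhs => rw [← c.sum_repr (X.co r g)]
        rfl
      rw [Finset.sum_congr rfl (fun i _ => hterm i), ← Finset.sum_mul, ← map_sum, hsum]
    rw [hexp]
    apply Submodule.sum_mem
    intro i _
    have hc : ((c.repr (X.co r g)) i : K) ∈ fixedSubfield K G ψ := SetLike.coe_mem _
    exact Submodule.smul_mem _
      (⟨_, X.gen_center hcomm hc hh⟩ : Subring.center R)
      (Submodule.subset_span ⟨(i, j), rfl⟩)
  exact ⟨Module.Basis.mk hli hsp, fun ij => Module.Basis.mk_apply hli hsp ij⟩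

end CrossedProduct

/-- Let `R = K#G` be a crossed product of a field `K` by a free abelian group `G` of finite
rank via `ψ`, with `ψ(G)` finite of cardinality `k`.  Then `R` is a free module of rank `k²`
over its center; explicitly, if `(c_i)` is a basis of `K` over the fixed field `E = K^{ψ(G)}`
and `g_1, …, g_k` are coset representatives of `H = ker ψ` in `G`, then
`(emb c_i * u g_j)` is a basis of `R` over `Z(R)`. -/
theorem crossedProduct_free_over_center
    (K G R : Type*) [Field K] [Group G] [Ring R] (ψ : G →* (K ≃+* K))
    (hG : IsFreeAbelianOfFiniteRank G) (X : CrossedProduct K G R ψ)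
    (k : ℕ) (hfin : Finite ψ.range) (hk : Nat.card ψ.range = k) :
    Module.Free (Subring.center R) R ∧
    Module.rank (Subring.center R) R = (k ^ 2 : ℕ) ∧
    ∀ (c : Module.Basis (Fin k) (fixedSubfield K G ψ) K) (gr : Fin k → G),
      (∀ g : G, ∃! j : Fin k, (gr j)⁻¹ * g ∈ ψ.ker) →
      ∃ b : Module.Basis (Fin k × Fin k) (Subring.center R) R,
        ∀ ij : Fin k × Fin k, b ij = X.emb (c ij.1) * (X.u (gr ij.2) : R) := by
  classical
  obtain ⟨n, ⟨eG⟩⟩ := hG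
  have hcomm : ∀ a b : G, a * b = b * a := fun a b =>
    eG.injective (by rw [map_mul, map_mul, mul_comm])
  -- R is nontrivial
  have hnt : Nontrivial R := by
    by_contra htriv
    rw [not_nontrivial_iff_subsingleton] at htriv
    have h1 : X.toR (Finsupp.single (1 : G) (1 : K)) = X.toR 0 := Subsingleton.elim _ _
    have h2 := X.toR_bijective.1 h1
    have h3 := congrArg (fun F : G →₀ K => F 1) h2
    simpa using h3
  haveI : Nontrivial (Subring.center R) := ⟨⟨0, 1, fun h => by
    have h2 : ((0 : Subring.center R) : R) = ((1 : Subring.center R) : R) :=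
      congrArg Subtype.val h
    simp at h2⟩⟩
  haveI := commRing_strongRankCondition (Subring.center R)
  -- Artin: a basis of K over the fixed field
  haveI : Fintype ψ.range := Fintype.ofFinite _
  letI act : MulSemiringAction ψ.range K := MulSemiringAction.compHom K ψ.range.subtype
  haveI : @FaithfulSMul ψ.range K act.toDistribMulAction.toMulAction.toSMul :=
    ⟨fun {a b} h => Subtype.ext (RingEquiv.ext fun x => h x)⟩
  have hEeq : fixedSubfield K G ψ = FixedPoints.subfield ψ.range K := by
    ext x
    rw [CrossedProduct.mem_fixedSubfield]
    show _ ↔ x ∈ MulAction.fixedPoints ψ.range K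
    rw [MulAction.mem_fixedPoints]
    constructor
    · intro hx m
      obtain ⟨g, hg⟩ := m.2
      show (m : K ≃+* K) x = x
      rw [← hg]
      exact hx g
    · intro hx g
      exact hx ⟨ψ g, ⟨g, rfl⟩⟩
  have hfr : Module.finrank (FixedPoints.subfield ψ.range K) K = k := by
    rw [FixedPoints.finrank_eq_card, ← Nat.card_eq_fintype_card, hk]
  obtain ⟨c⟩ : Nonempty (Module.Basis (Fin k) (fixedSubfield K G ψ) K) := by
    rw [hEeq]
    exact ⟨Module.finBasisOfFinrankEq _ _ hfr⟩
  -- coset representatives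
  haveI : Finite (G ⧸ ψ.ker) :=
    Finite.of_equiv _ (QuotientGroup.quotientKerEquivRange ψ).toEquiv.symm
  haveI : Fintype (G ⧸ ψ.ker) := Fintype.ofFinite _
  have hcard : Fintype.card (G ⧸ ψ.ker) = k := by
    rw [← Nat.card_eq_fintype_card,
      Nat.card_congr (QuotientGroup.quotientKerEquivRange ψ).toEquiv, hk]
  set eq : (G ⧸ ψ.ker) ≃ Fin k := Fintype.equivFinOfCardEq hcard with heq
  set gr : Fin k → G := fun j => (eq.symm j).out with hgrdef
  have hmk : ∀ j : Fin k, ((gr j : G) : G ⧸ ψ.ker) = eq.symm j := fun j =>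
    QuotientGroup.out_eq' (eq.symm j)
  have hgr : ∀ g : G, ∃! j : Fin k, (gr j)⁻¹ * g ∈ ψ.ker := by
    intro g
    refine ⟨eq (QuotientGroup.mk g), ?_, ?_⟩
    · refine QuotientGroup.eq.1 ?_
      rw [hmk, Equiv.symm_apply_apply]
    · intro j hj
      have h1 : ((gr j : G) : G ⧸ ψ.ker) = QuotientGroup.mk g := QuotientGroup.eq.2 hj
      rw [hmk] at h1
      rw [← h1, Equiv.apply_symm_apply]
  obtain ⟨b, hb⟩ := X.exists_basis hcomm k c gr hgr
  have hcard2 : Fintype.card (Fin k × Fin k) = k ^ 2 := by simp [sq]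
  refine ⟨Module.Free.of_basis b, ?_, fun c' gr' hgr' => X.exists_basis hcomm k c' gr' hgr'⟩
  rw [rank_eq_card_basis b, hcard2]
end

section
/- Let K be a field, G a free abelian group of finite rank, ψ : G → Aut(K) an injective group homomorphism, and R = K#G a crossed product of K by G via ψ. Then R is a simple ring: its only two-sided ideals are 0 and R. -/
section Aux
variable {K G R : Type*} [Field K] [Group G] [Ring R] {ψ : G →* (K ≃+* K)}
  (X : CrossedProduct K G R ψ)

noncomputable def CrossedProduct.coeff (r : R) : G →₀ K := (X.repr r).exists.choose

lemma CrossedProduct.coeff_spec (r : R) :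
    r = (X.coeff r).sum fun g c => X.emb c * (X.u g : R) := (X.repr r).exists.choose_spec

lemma CrossedProduct.coeff_unique {r : R} {f : G →₀ K}
    (h : r = f.sum fun g c => X.emb c * (X.u g : R)) : X.coeff r = f :=
  ((X.repr r).unique (X.coeff_spec r) h)

lemma CrossedProduct.coeff_zero : X.coeff (0 : R) = 0 := by
  apply X.coeff_unique; simp [Finsupp.sum_zero_index]

lemma CrossedProduct.eq_zero_of_coeff_eq_zero {r : R} (h : X.coeff r = 0) : r = 0 := by
  have h2 := X.coeff_spec r
  rw [h] at h2
  simpa [Finsupp.sum_zero_index] using h2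

lemma CrossedProduct.coeff_mul_u (r : R) (h : G) :
    X.coeff (r * (X.u h : R)) = Finsupp.mapDomain (· * h) (X.coeff r) := by
  apply X.coeff_unique
  rw [Finsupp.sum_mapDomain_index_inj (mul_left_injective h)]
  conv_lhs => rw [X.coeff_spec r]
  rw [Finsupp.sum_mul]
  exact Finsupp.sum_congr fun g _ => by rw [mul_assoc, ← Units.val_mul, X.u_mul]

end Aux

/-- Let `R = K#G` be a crossed product of a field `K` by a free abelian group `G` of finite
rank via an injective `ψ`.  Then `R` is a simple ring: its only two-sided ideals are `0`
and `R`. -/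
theorem crossedProduct_simple
    (K G R : Type*) [Field K] [Group G] [Ring R] (ψ : G →* (K ≃+* K))
    (hG : IsFreeAbelianOfFiniteRank G) (hψ : Function.Injective ψ)
    (X : CrossedProduct K G R ψ) :
    ∀ I : TwoSidedIdeal R, I = ⊥ ∨ I = ⊤ := by
  classical
  intro I
  by_cases hI : I = ⊥
  · exact Or.inl hI
  right
  -- there is a nonzero element of I
  have hex : ∃ r : R, r ∈ I ∧ r ≠ 0 := by
    by_contra h
    push_neg at h
    exact hI (TwoSidedIdeal.ext fun x =>
      ⟨fun hx => show x = 0 from h x hx,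
       fun hx => by rw [show x = 0 from hx]; exact I.zero_mem⟩)
  have hPex : ∃ n : ℕ, ∃ r : R, r ∈ I ∧ r ≠ 0 ∧ (X.coeff r).support.card = n :=
    ⟨_, hex.choose, hex.choose_spec.1, hex.choose_spec.2, rfl⟩
  set n := Nat.find hPex with hn
  obtain ⟨r0, hr0I, hr0, hcard0⟩ := Nat.find_spec hPex
  have hf0 : X.coeff r0 ≠ 0 := fun h => hr0 (X.eq_zero_of_coeff_eq_zero h)
  obtain ⟨g0, hg0⟩ := Finsupp.support_nonempty_iff.mpr hf0
  -- shift so that 1 is in the support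
  set r := r0 * (X.u g0⁻¹ : R) with hrdef
  have hrI : r ∈ I := I.mul_mem_right _ _ hr0I
  have hinj : Function.Injective (· * g0⁻¹ : G → G) := mul_left_injective _
  obtain ⟨f, hfdef⟩ : ∃ f : G →₀ K, X.coeff r = f := ⟨_, rfl⟩
  have hcoeffr : f = Finsupp.mapDomain (· * g0⁻¹) (X.coeff r0) := by
    rw [← hfdef, hrdef]; exact X.coeff_mul_u r0 g0⁻¹
  have hf1 : f 1 ≠ 0 := by
    have h1 : (1 : G) = g0 * g0⁻¹ := (mul_inv_cancel g0).symm
    rw [hcoeffr, h1, Finsupp.mapDomain_apply hinj]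
    exact Finsupp.mem_support_iff.mp hg0
  have h1mem : (1 : G) ∈ f.support := Finsupp.mem_support_iff.mpr hf1
  have hcardf : f.support.card = n := by
    rw [hcoeffr, Finsupp.mapDomain_support_of_injective hinj,
      Finset.card_image_of_injective _ hinj, hcard0]
  -- the support must be {1}
  have hsupp : f.support = {1} := by
    by_contra hne
    obtain ⟨h, hhmem, hh1⟩ : ∃ h ∈ f.support, h ≠ 1 := by
      by_contra hc
      push_neg at hc
      exact hne (Finset.eq_singleton_iff_unique_mem.mpr ⟨h1mem, fun x hx => hc x hx⟩)
    have hψh : ψ h ≠ 1 := fun he => hh1 (hψ (he.trans (map_one ψ).symm))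
    obtain ⟨c, hc⟩ : ∃ c : K, ψ h c ≠ c := by
      by_contra hc
      push_neg at hc
      exact hψh (RingEquiv.ext fun x => hc x)
    set t : G →₀ K := Finsupp.onFinset f.support (fun g => f g * (c - ψ g c))
      (fun g hg => Finsupp.mem_support_iff.mpr
        (fun h0 => hg (show f g * (c - ψ g c) = 0 by rw [h0, zero_mul]))) with ht
    have htapply : ∀ g : G, t g = f g * (c - ψ g c) := fun g => rfl
    set s := X.emb c * r - r * X.emb c with hs
    have hsI : s ∈ I := I.sub_mem (I.mul_mem_left _ _ hrI) (I.mul_mem_right _ _ hrI)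
    have htsub : t.support ⊆ f.support := Finsupp.support_onFinset_subset
    have hscoeff : X.coeff s = t := by
      apply X.coeff_unique
      have e1 : X.emb c * r =
          f.sum fun g cg => X.emb (cg * (c - ψ g c) + cg * ψ g c) * (X.u g : R) := by
        conv_lhs => rw [X.coeff_spec r, hfdef]
        rw [Finsupp.mul_sum]
        exact Finsupp.sum_congr fun g _ => by
          rw [← mul_assoc, ← map_mul]
          ring_nf
      have e2 : r * X.emb c = f.sum fun g cg => X.emb (cg * ψ g c) * (X.u g : R) := by
        conv_lhs => rw [X.coeff_spec r, hfdef]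
        rw [Finsupp.sum_mul]
        exact Finsupp.sum_congr fun g _ => by
          rw [mul_assoc, X.conj, ← mul_assoc, ← map_mul]
      rw [hs, e1, e2, ← Finsupp.sum_sub]
      have e3 : (f.sum fun g cg =>
          X.emb (cg * (c - ψ g c) + cg * ψ g c) * (X.u g : R)
            - X.emb (cg * ψ g c) * (X.u g : R))
          = ∑ g ∈ f.support, X.emb (t g) * (X.u g : R) := by
        refine Finset.sum_congr rfl fun g hg => ?_
        show X.emb (f g * (c - ψ g c) + f g * ψ g c) * (X.u g : R)
            - X.emb (f g * ψ g c) * (X.u g : R) = X.emb (t g) * (X.u g : R)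
        rw [map_add, add_mul, add_sub_cancel_right, htapply g]
      rw [e3, Finsupp.sum]
      exact (Finset.sum_subset htsub fun g _ hg => by
        rw [Finsupp.notMem_support_iff.mp hg, map_zero, zero_mul]).symm
    have hth : t h ≠ 0 := by
      rw [htapply h]
      exact mul_ne_zero (Finsupp.mem_support_iff.mp hhmem) (sub_ne_zero.mpr (Ne.symm hc))
    have hs0 : s ≠ 0 := fun h0 => hth (by rw [← hscoeff, h0, X.coeff_zero]; rfl)
    have ht1 : t 1 = 0 := by
      have hone : ψ (1 : G) c = c := by rw [map_one ψ]; rfl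
      rw [htapply 1, hone, sub_self, mul_zero]
    have htsub' : t.support ⊆ f.support.erase 1 := fun g hg =>
      Finset.mem_erase.mpr ⟨fun h1 => (Finsupp.mem_support_iff.mp hg) (h1 ▸ ht1), htsub hg⟩
    have hlt : t.support.card < n := by
      calc t.support.card ≤ (f.support.erase 1).card := Finset.card_le_card htsub'
        _ < f.support.card := Finset.card_erase_lt_of_mem h1mem
        _ = n := hcardf
    have hge : n ≤ t.support.card := by
      rw [← hscoeff]
      exact Nat.find_le ⟨s, hsI, hs0, rfl⟩
    omega
  -- conclude
  have hr1 : r = X.emb (f 1) := by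
    have h2 := X.coeff_spec r
    rw [hfdef, Finsupp.sum, hsupp, Finset.sum_singleton, X.u_one] at h2
    simpa using h2
  have h1I : (1 : R) ∈ I := by
    have hmem := I.mul_mem_left (X.emb (f 1)⁻¹) r hrI
    rwa [hr1, ← map_mul, inv_mul_cancel₀ hf1, map_one] at hmem
  exact I.eq_top h1I
end

section
/- Let F be a field, let L be a finite-degree Galois extension of F, and let E be a purely transcendental extension of F, i.e., E is the field of rational functions F(x_i : i ∈ I) (the fraction field of a polynomial ring over F). Then the tensor product L ⊗_F E is a field, L ⊗_F E is a Galois extension of E with [L ⊗_F E : E] = [L : F], and Gal((L ⊗_F E)/E) ≅ Gal(L/F). -/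
open scoped TensorProduct

namespace GaloisBaseChangeAux

section Aux
variable (F L E : Type*) [Field F] [Field L] [Field E]
    [Algebra F L] [FiniteDimensional F L] [IsGalois F L]
    (I : Type*) [Algebra F E] [Algebra (MvPolynomial I F) E]
    [IsScalarTower F (MvPolynomial I F) E] [IsFractionRing (MvPolynomial I F) E]

attribute [local instance] Algebra.TensorProduct.rightAlgebra MvPolynomial.algebraMvPolynomial

set_option linter.unusedSectionVars false

local notation "Rq" => MvPolynomial I F
local notation "Sq" => MvPolynomial I L
local notation "Aq" => L ⊗[F] E
local notation "K" => FractionRing Sq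

noncomputable def theta : Sq →+* Aq :=
  (MvPolynomial.eval₂Hom ((Algebra.TensorProduct.includeLeftRingHom : L →+* Aq))
    (fun i => (1 : L) ⊗ₜ algebraMap Rq E (MvPolynomial.X i)))

lemma theta_comp : (theta F L E I).comp (algebraMap Rq Sq)
    = (Algebra.TensorProduct.includeRight.toRingHom.comp (algebraMap Rq E)) := by
  apply MvPolynomial.ringHom_ext
  · intro f
    have h1 : algebraMap Rq Sq (MvPolynomial.C f) = MvPolynomial.C (algebraMap F L f) := by
      simp
    have h2 : algebraMap Rq E (MvPolynomial.C f : Rq) = algebraMap F E f := by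
      rw [← MvPolynomial.algebraMap_eq, ← IsScalarTower.algebraMap_apply]
    simp only [RingHom.comp_apply, h1, h2, theta, MvPolynomial.eval₂Hom_C]
    have := (Algebra.TensorProduct.includeRight (R := F) (A := L) (B := E)).commutes f
    simp only [AlgHom.toRingHom_eq_coe, RingHom.coe_coe]
    rw [this]
    rfl
  · intro i
    simp [theta]

lemma algMapRK_eq : (algebraMap Rq K) = (algebraMap Sq K).comp (algebraMap Rq Sq) :=
  IsScalarTower.algebraMap_eq Rq Sq K

noncomputable def gE : E →+* K :=
  IsLocalization.lift (M := nonZeroDivisors Rq) (g := algebraMap Rq K)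
    (fun r => by
      have h1 : algebraMap Rq Sq r.1 ∈ nonZeroDivisors Sq := by
        refine mem_nonZeroDivisors_of_ne_zero ?_
        intro h
        have : (r : Rq) = 0 := by
          have hinj : Function.Injective (algebraMap Rq Sq) := by
            simp only [MvPolynomial.algebraMap_def]
            exact MvPolynomial.map_injective _ (algebraMap F L).injective
          exact hinj (by simpa using h)
        exact nonZeroDivisors.ne_zero r.2 (by simpa using this)
      rw [algMapRK_eq]
      exact IsLocalization.map_units K ⟨_, h1⟩)

lemma gE_algebraMap (r : Rq) : gE F L E I (algebraMap Rq E r) = algebraMap Rq K r := by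
  simp only [gE]
  exact IsLocalization.lift_eq _ r

noncomputable def rho : Aq →ₐ[F] K :=
  Algebra.TensorProduct.productMap (IsScalarTower.toAlgHom F L K)
    { toRingHom := gE F L E I, commutes' := fun f => by
        show gE F L E I (algebraMap F E f) = algebraMap F K f
        rw [IsScalarTower.algebraMap_apply F Rq E, gE_algebraMap,
          ← IsScalarTower.algebraMap_apply] }

lemma rho_theta : (rho F L E I).toRingHom.comp (theta F L E I) = algebraMap Sq K := by
  apply MvPolynomial.ringHom_ext
  · intro l
    show rho F L E I (theta F L E I (MvPolynomial.C l)) = _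
    have h1 : theta F L E I (MvPolynomial.C l) = l ⊗ₜ 1 := by
      simp [theta]
    rw [h1]
    show algebraMap L K l * gE F L E I 1 = _
    rw [map_one, mul_one, IsScalarTower.algebraMap_apply L Sq K]
    rfl
  · intro i
    show rho F L E I (theta F L E I (MvPolynomial.X i)) = _
    have h1 : theta F L E I (MvPolynomial.X i) = (1:L) ⊗ₜ algebraMap Rq E (MvPolynomial.X i) := by
      simp [theta]
    rw [h1]
    show algebraMap L K 1 * gE F L E I (algebraMap Rq E (MvPolynomial.X i)) = _
    rw [map_one, one_mul, gE_algebraMap, algMapRK_eq]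
    simp
end Aux

section Loc
attribute [local instance] Algebra.TensorProduct.rightAlgebra MvPolynomial.algebraMvPolynomial
set_option linter.unusedSectionVars false
variable (F L E : Type*) [Field F] [Field L] [Field E]
    [Algebra F L] [FiniteDimensional F L] [IsGalois F L]
    (I : Type*) [Algebra F E] [hA : Algebra (MvPolynomial I F) E]
    [hT : IsScalarTower F (MvPolynomial I F) E] [hF : IsFractionRing (MvPolynomial I F) E]
local notation "Rq" => MvPolynomial I F
local notation "Sq" => MvPolynomial I L
local notation "Aq" => L ⊗[F] E
local notation "K" => FractionRing Sq
local notation "Mq" => Algebra.algebraMapSubmonoid Sq (nonZeroDivisors Rq)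

lemma theta_algebraMap (r : Rq) :
    theta F L E I (algebraMap Rq Sq r) = (1 : L) ⊗ₜ algebraMap Rq E r :=
  congrFun (congrArg DFunLike.coe (theta_comp F L E I)) r

lemma theta_injective : Function.Injective (theta F L E I) := by
  have h : Function.Injective ((rho F L E I).toRingHom.comp (theta F L E I)) := by
    rw [rho_theta]
    exact IsFractionRing.injective Sq K
  exact fun a b hab => h (by simp [RingHom.comp_apply, hab])

lemma theta_surj (z : Aq) : ∃ x : Sq × Mq, z * theta F L E I x.2 = theta F L E I x.1 := by
  induction z using TensorProduct.induction_on with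
  | zero => exact ⟨⟨0, 1⟩, by simp⟩
  | tmul l e =>
      obtain ⟨⟨p, q⟩, hq⟩ := IsLocalization.surj (nonZeroDivisors Rq) e
      refine ⟨⟨MvPolynomial.C l * algebraMap Rq Sq p,
        ⟨algebraMap Rq Sq q, q, q.2, rfl⟩⟩, ?_⟩
      simp only [map_mul, theta_algebraMap]
      have hCl : theta F L E I (MvPolynomial.C l) = l ⊗ₜ 1 := by simp [theta]
      rw [hCl]
      rw [Algebra.TensorProduct.tmul_mul_tmul, Algebra.TensorProduct.tmul_mul_tmul]
      rw [mul_one, one_mul, hq]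
  | add x y hx hy =>
      obtain ⟨⟨sx, mx⟩, hx⟩ := hx
      obtain ⟨⟨sy, my⟩, hy⟩ := hy
      refine ⟨⟨sx * my + sy * mx, mx * my⟩, ?_⟩
      push_cast
      simp only [map_add, map_mul]
      linear_combination theta F L E I ↑my * hx + theta F L E I ↑mx * hy

lemma isLoc : letI : Algebra Sq Aq := (theta F L E I).toAlgebra
    IsLocalization Mq Aq := by
  letI : Algebra Sq Aq := (theta F L E I).toAlgebra
  constructor
  constructor
  · rintro ⟨_, r, hr, rfl⟩
    show IsUnit (theta F L E I (algebraMap Rq Sq r))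
    rw [theta_algebraMap]
    have hre : algebraMap Rq E r ≠ 0 := fun h =>
      nonZeroDivisors.ne_zero hr (IsFractionRing.injective Rq E (by simpa using h))
    have : IsUnit (algebraMap Rq E r) := isUnit_iff_ne_zero.mpr hre
    exact this.map (Algebra.TensorProduct.includeRight (R := F) (A := L)).toRingHom
  · intro z
    exact theta_surj F L E I z
  · intro a b hab
    exact ⟨1, by simpa using theta_injective F L E I hab⟩

include hA hT hF in
lemma isDomainA : IsDomain Aq := by
  letI : Algebra Sq Aq := (theta F L E I).toAlgebra
  haveI := isLoc F L E I
  refine IsLocalization.isDomain_of_le_nonZeroDivisors (S := Aq) (R := Sq) (M := Mq) ?_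
  rintro _ ⟨r, hr, rfl⟩
  refine mem_nonZeroDivisors_of_ne_zero fun h => ?_
  have hinj : Function.Injective (algebraMap Rq Sq) := by
    simp only [MvPolynomial.algebraMap_def]
    exact MvPolynomial.map_injective _ (algebraMap F L).injective
  exact nonZeroDivisors.ne_zero hr (hinj (by simpa using h))
end Loc

section Fin
attribute [local instance] Algebra.TensorProduct.rightAlgebra
set_option linter.unusedSectionVars false
variable (F L E : Type*) [Field F] [Field L] [Field E]
    [Algebra F L] [FiniteDimensional F L] [Algebra F E]

noncomputable def commE : (L ⊗[F] E) ≃ₗ[E] E ⊗[F] L :=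
  { (TensorProduct.comm F L E).toAddEquiv with
    map_smul' := fun e x => by
      induction x using TensorProduct.induction_on with
      | zero => simp
      | tmul l e' =>
          have h : e • (l ⊗ₜ[F] e') = l ⊗ₜ[F] (e * e') := by
            show (1 : L) ⊗ₜ[F] e * l ⊗ₜ[F] e' = _
            rw [Algebra.TensorProduct.tmul_mul_tmul, one_mul]
          simp only [RingHom.id_apply, h]
          show (e * e') ⊗ₜ[F] l = e • (e' ⊗ₜ[F] l)
          rw [TensorProduct.smul_tmul', smul_eq_mul]
      | add x y hx hy => simp_all [smul_add] }

lemma finiteA : Module.Finite E (L ⊗[F] E) :=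
  Module.Finite.equiv (commE F L E).symm

lemma finrankA : Module.finrank E (L ⊗[F] E) = Module.finrank F L := by
  rw [LinearEquiv.finrank_eq (commE F L E), Module.finrank_baseChange]
end Fin

section Main
open IntermediateField
attribute [local instance] Algebra.TensorProduct.rightAlgebra
set_option linter.unusedSectionVars false
variable (F L E : Type*) [Field F] [Field L] [Field E]
    [Algebra F L] [FiniteDimensional F L] [IsGalois F L]
    (I : Type*) [Algebra F E] [hA : Algebra (MvPolynomial I F) E]
    [hT : IsScalarTower F (MvPolynomial I F) E] [hF : IsFractionRing (MvPolynomial I F) E]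
local notation "Aq" => L ⊗[F] E

include hA hT hF in
lemma isFieldA : IsField Aq := by
  haveI := isDomainA F L E I
  haveI := finiteA F L E
  haveI : Algebra.IsIntegral E Aq := Algebra.IsIntegral.of_finite E Aq
  exact (Algebra.IsIntegral.isField_iff_isField
    (RingHom.injective (algebraMap E Aq))).mp (Field.toIsField E)

include hA hT hF in
lemma isGaloisA :
    letI : Field Aq := (isFieldA F L E I).toField
    IsGalois E Aq := by
  letI : Field Aq := (isFieldA F L E I).toField
  haveI := finiteA F L E
  obtain ⟨α, hα⟩ := Field.exists_primitive_element F L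
  set p := minpoly F α with hp
  have hint : IsIntegral F α := Algebra.IsIntegral.isIntegral α
  have hsep : p.Separable := Algebra.IsSeparable.isSeparable F α
  have hsplitL : (p.map (algebraMap F L)).Splits := (IsGalois.to_normal (F := F) (E := L)).splits α
  have hmapFA : (algebraMap F Aq) = (Algebra.TensorProduct.includeLeftRingHom (R := F) (A := L) (B := E)).comp (algebraMap F L) := by
    ext f
    exact (Algebra.TensorProduct.includeLeft.commutes f).symm
  have hsplitA : (p.map (algebraMap F Aq)).Splits := by
    rw [hmapFA, ← Polynomial.map_map]
    exact hsplitL.map _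
  set q : Polynomial E := p.map (algebraMap F E) with hq
  have hqsep : q.Separable := hsep.map
  have hsplitAq : (q.map (algebraMap E Aq)).Splits := by
    rw [hq, Polynomial.map_map, ← IsScalarTower.algebraMap_eq]
    exact hsplitA
  set α' : Aq := Algebra.TensorProduct.includeLeft (R := F) (S := F) (A := L) (B := E) α with hα'
  have hqne : q ≠ 0 := by
    rw [hq]
    exact Polynomial.map_ne_zero (minpoly.ne_zero hint)
  have haev : Polynomial.aeval α' q = 0 := by
    rw [hq, Polynomial.aeval_map_algebraMap, hα', Polynomial.aeval_algHom_apply,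
      minpoly.aeval, map_zero]
  have hroot : α' ∈ q.rootSet Aq := by
    rw [Polynomial.mem_rootSet]
    exact ⟨hqne, haev⟩
  have hadj : Algebra.adjoin E {α'} = ⊤ := by
    rw [eq_top_iff]
    rintro x -
    induction x using TensorProduct.induction_on with
    | zero => exact zero_mem _
    | add x y hx hy => exact add_mem hx hy
    | tmul l e =>
        have h1 : (l ⊗ₜ[F] e : Aq) = (l ⊗ₜ[F] 1) * ((1 : L) ⊗ₜ[F] e) := by
          rw [Algebra.TensorProduct.tmul_mul_tmul, mul_one, one_mul]
        rw [h1]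
        refine mul_mem ?_ ?_
        · have hl : l ∈ Algebra.adjoin F {α} := by
            rw [← IntermediateField.adjoin_simple_toSubalgebra_of_isAlgebraic hint.isAlgebraic,
              IntermediateField.mem_toSubalgebra, hα]
            exact IntermediateField.mem_top
          have h2 : (l ⊗ₜ[F] 1 : Aq) ∈ Algebra.adjoin F {α'} := by
            have h0 := AlgHom.map_adjoin
              (Algebra.TensorProduct.includeLeft (R := F) (S := F) (A := L) (B := E)) {α}
            have hmem : (l ⊗ₜ[F] 1 : Aq) ∈ Subalgebra.map
                (Algebra.TensorProduct.includeLeft (R := F) (S := F) (A := L) (B := E))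
                (Algebra.adjoin F {α}) :=
              Subalgebra.mem_map.mpr ⟨l, hl, rfl⟩
            rw [h0] at hmem
            simpa [hα'] using hmem
          have h3 : Algebra.adjoin F {α'} ≤
              Subalgebra.restrictScalars F (Algebra.adjoin E {α'}) :=
            Algebra.adjoin_le Algebra.subset_adjoin
          exact h3 h2
        · exact Subalgebra.algebraMap_mem (Algebra.adjoin E {α'}) e
  have hadjr : Algebra.adjoin E (q.rootSet Aq) = ⊤ := by
    rw [eq_top_iff, ← hadj]
    exact Algebra.adjoin_mono (Set.singleton_subset_iff.mpr hroot)
  haveI : Polynomial.IsSplittingField E Aq q := ⟨hsplitAq, hadjr⟩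
  exact IsGalois.of_separable_splitting_field hqsep

noncomputable def Psi (τ : L ≃ₐ[F] L) : Aq ≃ₐ[E] Aq :=
  AlgEquiv.ofRingEquiv
    (f := (Algebra.TensorProduct.congr τ (AlgEquiv.refl (R := F) (A₁ := E))).toRingEquiv)
    (fun e => by
      show Algebra.TensorProduct.congr τ (AlgEquiv.refl (R := F) (A₁ := E)) ((1 : L) ⊗ₜ[F] e)
        = (1 : L) ⊗ₜ[F] e
      rw [Algebra.TensorProduct.congr_apply, Algebra.TensorProduct.map_tmul]
      simp)

lemma Psi_tmul (τ : L ≃ₐ[F] L) (l : L) (e : E) :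
    Psi F L E τ (l ⊗ₜ[F] e) = τ l ⊗ₜ[F] e := by
  show Algebra.TensorProduct.congr τ (AlgEquiv.refl (R := F) (A₁ := E)) (l ⊗ₜ[F] e) = τ l ⊗ₜ[F] e
  rw [Algebra.TensorProduct.congr_apply, Algebra.TensorProduct.map_tmul]
  rfl

noncomputable def Phi : (L ≃ₐ[F] L) →* (Aq ≃ₐ[E] Aq) where
  toFun := Psi F L E
  map_one' := by
    apply AlgEquiv.ext
    intro x
    induction x using TensorProduct.induction_on with
    | zero => simp
    | tmul l e => rw [Psi_tmul]; rfl
    | add x y hx hy => rw [map_add, hx, hy, map_add]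
  map_mul' τ₁ τ₂ := by
    apply AlgEquiv.ext
    intro x
    induction x using TensorProduct.induction_on with
    | zero => simp
    | tmul l e =>
        show Psi F L E (τ₁ * τ₂) (l ⊗ₜ e) = Psi F L E τ₁ (Psi F L E τ₂ (l ⊗ₜ e))
        rw [Psi_tmul, Psi_tmul, Psi_tmul]
        rfl
    | add x y hx hy =>
        show Psi F L E (τ₁ * τ₂) (x + y) = Psi F L E τ₁ (Psi F L E τ₂ (x + y))
        rw [map_add, hx, hy, map_add, map_add]
        rfl


include hA hT hF in
lemma nonemptyIso :
    letI : Field Aq := (isFieldA F L E I).toField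
    Nonempty ((Aq ≃ₐ[E] Aq) ≃* (L ≃ₐ[F] L)) := by
  letI : Field Aq := (isFieldA F L E I).toField
  haveI : Module.Finite E Aq := finiteA F L E
  haveI : IsGalois E Aq := isGaloisA F L E I
  have hinj : Function.Injective (Phi F L E) := by
    intro τ₁ τ₂ h
    apply AlgEquiv.ext
    intro l
    have h1 : Psi F L E τ₁ (l ⊗ₜ[F] (1 : E)) = Psi F L E τ₂ (l ⊗ₜ[F] (1 : E)) := by
      rw [show Psi F L E τ₁ = Phi F L E τ₁ from rfl, h]
      rfl
    rw [Psi_tmul, Psi_tmul] at h1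
    have hincl : Function.Injective
        (Algebra.TensorProduct.includeLeftRingHom (R := F) (A := L) (B := E)) :=
      RingHom.injective _
    exact hincl h1
  have hcard : Fintype.card (L ≃ₐ[F] L) = Fintype.card (Aq ≃ₐ[E] Aq) := by
    rw [← Nat.card_eq_fintype_card, ← Nat.card_eq_fintype_card, IsGalois.card_aut_eq_finrank, IsGalois.card_aut_eq_finrank, finrankA]
  have hbij : Function.Bijective (Phi F L E) :=
    (Fintype.bijective_iff_injective_and_card _).mpr ⟨hinj, hcard⟩
  exact ⟨(MulEquiv.ofBijective (Phi F L E) hbij).symm⟩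

include hA hT hF in
theorem galois_base_change_purely_transcendental' :
    letI : Algebra E (L ⊗[F] E) := Algebra.TensorProduct.rightAlgebra
    ∃ hf : IsField (L ⊗[F] E),
      (letI : Field (L ⊗[F] E) := hf.toField
       IsGalois E (L ⊗[F] E)) ∧
      Module.finrank E (L ⊗[F] E) = Module.finrank F L ∧
      Nonempty (((L ⊗[F] E) ≃ₐ[E] (L ⊗[F] E)) ≃* (L ≃ₐ[F] L)) :=
  ⟨isFieldA F L E I, isGaloisA F L E I, finrankA F L E, nonemptyIso F L E I⟩

end Main

end GaloisBaseChangeAux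

/-- Let `L/F` be a finite-degree Galois extension of fields and let `E` be a purely
transcendental extension of `F`, realized as the fraction field of a (multivariate) polynomial
ring over `F`.  Then `L ⊗_F E` (an `E`-algebra via `e ↦ 1 ⊗ e`) is a field, it is Galois over
`E` with `[L ⊗_F E : E] = [L : F]`, and `Gal((L ⊗_F E)/E) ≅ Gal(L/F)`. -/
theorem galois_base_change_purely_transcendental
    (F L E : Type*) [Field F] [Field L] [Field E]
    [Algebra F L] [FiniteDimensional F L] [IsGalois F L]
    (I : Type*) [Algebra F E] [Algebra (MvPolynomial I F) E]
    [IsScalarTower F (MvPolynomial I F) E] [IsFractionRing (MvPolynomial I F) E] :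
    letI : Algebra E (L ⊗[F] E) := Algebra.TensorProduct.rightAlgebra
    ∃ hf : IsField (L ⊗[F] E),
      (letI : Field (L ⊗[F] E) := hf.toField
       IsGalois E (L ⊗[F] E)) ∧
      Module.finrank E (L ⊗[F] E) = Module.finrank F L ∧
      Nonempty (((L ⊗[F] E) ≃ₐ[E] (L ⊗[F] E)) ≃* (L ≃ₐ[F] L)) := by
  exact GaloisBaseChangeAux.galois_base_change_purely_transcendental' F L E I
end
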